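/- Under H₀ in the ANOVA test: if Y = Xβ* + ε with X_S spanning the same column space together with F̂ in the sense X_S = F̂B̂_Sᵀ + Û_S and F̂ᵀÛ_S = 0, then the ANOVA statistic Q = ‖(I − P_{X_S})Y‖₂² − ‖(I − P_{F̂} − P_{Û_S})Y‖₂² equals ‖(P_{F̂} + P_{Û_S} − P_{X_S})ε‖₂², where P_M denotes orthogonal projection onto the column space of M, provided col(X_S) ⊆ col(F̂) ⊕ col(Û_S). -/
import Mathlib


open Matrix

/-- `P` is the orthogonal projection matrix onto the column space of `M`. -/
def IsOrthProjOnto {n m : ℕ} (P : Matrix (Fin n) (Fin n) ℝ)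
    (M : Matrix (Fin n) (Fin m) ℝ) : Prop :=
  P * P = P ∧ Pᵀ = P ∧ P * M = M ∧ ∀ y, ∃ v, P.mulVec y = M.mulVec v

lemma dot_mulVec_left {n : ℕ} (A : Matrix (Fin n) (Fin n) ℝ) (x y : Fin n → ℝ) :
    A.mulVec x ⬝ᵥ y = x ⬝ᵥ Aᵀ.mulVec y := by
  rw [Matrix.dotProduct_mulVec, Matrix.vecMul_transpose, dotProduct_comm]

lemma mat_ext_of_mulVec {n m : ℕ} {A B : Matrix (Fin n) (Fin m) ℝ}
    (h : ∀ y, A.mulVec y = B.mulVec y) : A = B := by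
  ext i j
  have := congrFun (h (Pi.single j 1)) i
  simpa [Matrix.mulVec_single] using this

lemma proj_mul_zero {n m k : ℕ} (P : Matrix (Fin n) (Fin n) ℝ)
    (M : Matrix (Fin n) (Fin m) ℝ) (N : Matrix (Fin n) (Fin k) ℝ)
    (hP : IsOrthProjOnto P M) (h : Mᵀ * N = 0) : P * N = 0 := by
  obtain ⟨hPP, hPT, hPM, hPy⟩ := hP
  ext i j
  have hcol : P.mulVec (fun i => N i j) = 0 := by
    obtain ⟨v, hv⟩ := hPy (fun i => N i j)
    have h0 : P.mulVec (fun i => N i j) ⬝ᵥ P.mulVec (fun i => N i j) = 0 := by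
      rw [dot_mulVec_left, hPT, Matrix.mulVec_mulVec, hPP, hv,
        Matrix.dotProduct_mulVec]
      have hz : Matrix.vecMul (fun i => N i j) M = 0 := by
        funext p
        have := congrFun (congrFun h p) j
        simpa [Matrix.mul_apply, Matrix.vecMul, dotProduct,
          mul_comm] using this
      rw [hz, zero_dotProduct]
    exact dotProduct_self_eq_zero.mp h0
  have := congrFun hcol i
  simpa [Matrix.mul_apply, Matrix.mulVec, dotProduct] using this

/-- Under H₀, the ANOVA statistic equals ‖(P_F̂ + P_Û − P_X)ε‖². -/
theorem anova_statistic_under_null (n s K : ℕ)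
    (X : Matrix (Fin n) (Fin s) ℝ) (F : Matrix (Fin n) (Fin K) ℝ)
    (U : Matrix (Fin n) (Fin s) ℝ) (Bh : Matrix (Fin s) (Fin K) ℝ)
    (hFU : Fᵀ * U = 0) (hX : X = F * Bhᵀ + U)
    (β : Fin s → ℝ) (ε : Fin n → ℝ) (Y : Fin n → ℝ)
    (hY : Y = X.mulVec β + ε)
    (PX PF PU : Matrix (Fin n) (Fin n) ℝ)
    (hPX : IsOrthProjOnto PX X) (hPF : IsOrthProjOnto PF F)
    (hPU : IsOrthProjOnto PU U) :
    ((1 - PX).mulVec Y ⬝ᵥ (1 - PX).mulVec Y)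
      - ((1 - PF - PU).mulVec Y ⬝ᵥ (1 - PF - PU).mulVec Y)
      = (PF + PU - PX).mulVec ε ⬝ᵥ (PF + PU - PX).mulVec ε := by
  have hUF : Uᵀ * F = 0 := by
    have := congrArg Matrix.transpose hFU
    simpa [Matrix.transpose_mul] using this
  have hPFU : PF * U = 0 := proj_mul_zero PF F U hPF hFU
  have hPUF : PU * F = 0 := proj_mul_zero PU U F hPU hUF
  set Q : Matrix (Fin n) (Fin n) ℝ := PF + PU with hQdef
  -- Q * X = X
  have hQX : Q * X = X := by
    have hexp : (PF + PU) * (F * Bhᵀ + U)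
        = PF * F * Bhᵀ + PF * U + (PU * F * Bhᵀ + PU * U) := by
      rw [Matrix.add_mul, Matrix.mul_add, Matrix.mul_add, ← Matrix.mul_assoc,
        ← Matrix.mul_assoc]
    rw [hQdef, hX, hexp, hPF.2.2.1, hPFU, hPUF, hPU.2.2.1]
    simp
  -- PF * PU = 0, PU * PF = 0
  have hPFPU : PF * PU = 0 := by
    apply mat_ext_of_mulVec
    intro y
    obtain ⟨v, hv⟩ := hPU.2.2.2 y
    rw [← Matrix.mulVec_mulVec, hv, Matrix.mulVec_mulVec, hPFU,
      Matrix.zero_mulVec, Matrix.zero_mulVec]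
  have hPUPF : PU * PF = 0 := by
    apply mat_ext_of_mulVec
    intro y
    obtain ⟨v, hv⟩ := hPF.2.2.2 y
    rw [← Matrix.mulVec_mulVec, hv, Matrix.mulVec_mulVec, hPUF,
      Matrix.zero_mulVec, Matrix.zero_mulVec]
  have hQQ : Q * Q = Q := by
    rw [hQdef]
    have : (PF + PU) * (PF + PU) = PF * PF + PF * PU + (PU * PF + PU * PU) := by
      noncomm_ring
    rw [this, hPF.1, hPU.1, hPFPU, hPUPF]
    simp
  have hQT : Qᵀ = Q := by
    rw [hQdef, Matrix.transpose_add, hPF.2.1, hPU.2.1]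
  -- Q * PX = PX
  have hQPX : Q * PX = PX := by
    apply mat_ext_of_mulVec
    intro y
    obtain ⟨v, hv⟩ := hPX.2.2.2 y
    rw [← Matrix.mulVec_mulVec, hv, Matrix.mulVec_mulVec, hQX]
  have hPXQ : PX * Q = PX := by
    have := congrArg Matrix.transpose hQPX
    rw [Matrix.transpose_mul, hQT, hPX.2.1] at this
    exact this
  -- R := Q - PX is an orthogonal projection
  set R : Matrix (Fin n) (Fin n) ℝ := Q - PX with hRdef
  have hRR : R * R = R := by
    have : (Q - PX) * (Q - PX) = Q * Q - Q * PX - (PX * Q - PX * PX) := by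
      noncomm_ring
    rw [hRdef, this, hQQ, hQPX, hPXQ, hPX.1]
    abel
  have hRT : Rᵀ = R := by
    rw [hRdef, Matrix.transpose_sub, hQT, hPX.2.1]
  -- projections applied to Y reduce to ε
  have hkill : ∀ (P : Matrix (Fin n) (Fin n) ℝ), P * X = X →
      (1 - P).mulVec Y = (1 - P).mulVec ε := by
    intro P hPXeq
    rw [hY, Matrix.mulVec_add]
    have : (1 - P).mulVec (X.mulVec β) = 0 := by
      rw [Matrix.mulVec_mulVec, Matrix.sub_mul, Matrix.one_mul, hPXeq,
        sub_self, Matrix.zero_mulVec]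
    rw [this, zero_add]
  have h1 : (1 - PX).mulVec Y = (1 - PX).mulVec ε := hkill PX hPX.2.2.1
  have h2 : (1 - PF - PU).mulVec Y = (1 - Q).mulVec ε := by
    have : (1 : Matrix (Fin n) (Fin n) ℝ) - PF - PU = 1 - Q := by
      rw [hQdef]; abel
    rw [this]
    exact hkill Q hQX
  -- quadratic form of a projection
  have hproj : ∀ (P : Matrix (Fin n) (Fin n) ℝ), P * P = P → Pᵀ = P →
      P.mulVec ε ⬝ᵥ P.mulVec ε = ε ⬝ᵥ P.mulVec ε := by
    intro P hPP hPT
    rw [dot_mulVec_left, hPT, Matrix.mulVec_mulVec, hPP]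
  have hIPX : (1 - PX) * (1 - PX) = 1 - PX := by
    have : (1 - PX) * (1 - PX) = 1 - PX - (PX - PX * PX) := by noncomm_ring
    rw [this, hPX.1]; abel
  have hIPXT : (1 - PX)ᵀ = 1 - PX := by
    rw [Matrix.transpose_sub, Matrix.transpose_one, hPX.2.1]
  have hIQ : (1 - Q) * (1 - Q) = 1 - Q := by
    have : (1 - Q) * (1 - Q) = 1 - Q - (Q - Q * Q) := by noncomm_ring
    rw [this, hQQ]; abel
  have hIQT : (1 - Q)ᵀ = 1 - Q := by
    rw [Matrix.transpose_sub, Matrix.transpose_one, hQT]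
  rw [h1, h2]
  rw [hproj _ hIPX hIPXT, hproj _ hIQ hIQT, hproj _ hRR hRT,
    ← dotProduct_sub, ← Matrix.sub_mulVec]
  congr 1
  rw [hRdef]
  abel
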